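/- arXiv:2510.05028 — 2 statements merged into one kernel-verified Lean document; each statement's English description precedes it below -/
import Mathlib

section
/- Let X be a finite type, let D be a probability mass function on X, let s ≥ 1 be a natural number, let G be a probability mass function on X^s, let ε ∈ [0,1) and κ ≥ 0 be reals, and let A ⊆ X^s be a set such that: (i) G(A) ≥ 1 − ε, and (ii) for every Y = (y₁,…,y_s) ∈ A with G(Y) > 0, G(Y) ≤ 2^κ · ∏_{i=1}^{s} D(yᵢ). Define the averaged marginal Marginal_G := (1/s) ∑_{i=1}^{s} Gᵢ, where Gᵢ is the i-th marginal of G. Then the total variation distance satisfies Δ(D, Marginal_G) ≤ ε + sqrt( 2·(log₂(1/(1−ε)) + κ) / s ). -/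
attribute [local instance] Classical.propDecidable

/-!
Conditioning `G` on `A` gives a distribution `P` within total variation `1 - G(A) ≤ ε` of `G`
whose density against `D^⊗s` is at most `C = 2^κ / G(A)`, so `KL(P ‖ D^⊗s) ≤ log C`. Against a
product reference measure, relative entropy dominates the sum of the relative entropies of the
marginals (chain rule plus Gibbs), so `∑ᵢ KL(Pᵢ ‖ D) ≤ log C`. The weak Pinsker inequality
`TV² ≤ KL`, obtained through the Hellinger distance, and convexity of `TV` then give
`TV(D, (1/s) ∑ᵢ Pᵢ) ≤ √(log C / s)`, and marginalising cannot increase `TV(P, G)`.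
-/

open Finset Real

noncomputable section

section Divergences

variable {α : Type*} [Fintype α]

def tvDist (p q : α → ℝ) : ℝ := 1 / 2 * ∑ x, |p x - q x|

/-- As `log (a / 0) = 0`, this is the relative entropy only when `q` does not vanish on the
support of `p`; the lemmas below assume so. -/
def relEntropy (p q : α → ℝ) : ℝ := ∑ x, p x * log (p x / q x)

lemma tvDist_nonneg (p q : α → ℝ) : 0 ≤ tvDist p q := by
  unfold tvDist
  positivity

lemma tvDist_comm (p q : α → ℝ) : tvDist p q = tvDist q p := by
  simp only [tvDist, abs_sub_comm]

lemma tvDist_triangle (p q r : α → ℝ) : tvDist p r ≤ tvDist p q + tvDist q r := by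
  simp only [tvDist, ← mul_add, ← sum_add_distrib]
  gcongr with x
  exact abs_sub_le _ _ _

lemma two_mul_sqrt_mul_sub_sqrt_le_mul_log_div {f g : ℝ} (hf : 0 ≤ f) (hfg : 0 < f → 0 < g) :
    2 * √f * (√f - √g) ≤ f * log (f / g) := by
  rcases hf.eq_or_lt with rfl | hf
  · simp
  have hsf : 0 < √f := sqrt_pos.2 hf
  have hsg : 0 < √g := sqrt_pos.2 (hfg hf)
  have hlog : log (f / g) = 2 * log (√f / √g) := by
    have hsq : f / g = (√f / √g) ^ 2 := by rw [div_pow, sq_sqrt hf.le, sq_sqrt (hfg hf).le]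
    rw [hsq, log_pow]
    norm_num
  have key : 1 - √g / √f ≤ log (√f / √g) := by
    simpa using one_sub_inv_le_log_of_pos (div_pos hsf hsg)
  calc 2 * √f * (√f - √g) = 2 * f * (1 - √g / √f) := by
        field_simp
        linear_combination (√f - √g) * sq_sqrt hf.le
    _ ≤ f * log (f / g) := by
        rw [hlog]
        nlinarith

lemma sum_sq_sqrt_sub_sqrt_add_sub_le_relEntropy {p q : α → ℝ} (hp : ∀ x, 0 ≤ p x)
    (hq : ∀ x, 0 ≤ q x) (hpq : ∀ x, 0 < p x → 0 < q x) :
    ∑ x, (√(p x) - √(q x)) ^ 2 + (∑ x, p x - ∑ x, q x) ≤ relEntropy p q := by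
  rw [← sum_sub_distrib, ← sum_add_distrib]
  refine sum_le_sum fun x _ => ?_
  have := two_mul_sqrt_mul_sub_sqrt_le_mul_log_div (hp x) (hpq x)
  nlinarith [sq_sqrt (hp x), sq_sqrt (hq x)]

lemma relEntropy_nonneg {p q : α → ℝ} (hp : ∀ x, 0 ≤ p x) (hq : ∀ x, 0 ≤ q x)
    (hpq : ∀ x, 0 < p x → 0 < q x) (hsum : ∑ x, q x ≤ ∑ x, p x) : 0 ≤ relEntropy p q := by
  have hle := sum_sq_sqrt_sub_sqrt_add_sub_le_relEntropy hp hq hpq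
  have hsq : 0 ≤ ∑ x, (√(p x) - √(q x)) ^ 2 := sum_nonneg fun x _ => sq_nonneg _
  linarith

/-- Cauchy–Schwarz applied to `|p - q| = |√p - √q| (√p + √q)`. -/
lemma tvDist_sq_le_sum_sq_sqrt_sub_sqrt {p q : α → ℝ} (hp : ∀ x, 0 ≤ p x) (hq : ∀ x, 0 ≤ q x)
    (hp1 : ∑ x, p x = 1) (hq1 : ∑ x, q x = 1) :
    tvDist p q ^ 2 ≤ ∑ x, (√(p x) - √(q x)) ^ 2 := by
  have habs : ∀ x, |p x - q x| = |√(p x) - √(q x)| * (√(p x) + √(q x)) := by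
    intro x
    rw [← abs_of_nonneg (by positivity : 0 ≤ √(p x) + √(q x)), ← abs_mul]
    congr 1
    nlinarith [sq_sqrt (hp x), sq_sqrt (hq x)]
  have hsum : ∑ x, (√(p x) + √(q x)) ^ 2 ≤ 4 := by
    calc ∑ x, (√(p x) + √(q x)) ^ 2 ≤ ∑ x, 2 * (p x + q x) := by
          gcongr with x
          nlinarith [sq_sqrt (hp x), sq_sqrt (hq x), sq_nonneg (√(p x) - √(q x))]
      _ = 4 := by rw [← mul_sum, sum_add_distrib, hp1, hq1]; norm_num
  have hCS := sum_mul_sq_le_sq_mul_sq univ (fun x => |√(p x) - √(q x)|)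
    fun x => √(p x) + √(q x)
  simp only [← habs, sq_abs] at hCS
  have hsq : 0 ≤ ∑ x, (√(p x) - √(q x)) ^ 2 := sum_nonneg fun x _ => sq_nonneg _
  unfold tvDist
  nlinarith

lemma tvDist_sq_le_relEntropy {p q : α → ℝ} (hp : ∀ x, 0 ≤ p x) (hq : ∀ x, 0 ≤ q x)
    (hpq : ∀ x, 0 < p x → 0 < q x) (hp1 : ∑ x, p x = 1) (hq1 : ∑ x, q x = 1) :
    tvDist p q ^ 2 ≤ relEntropy p q := by
  have hle := sum_sq_sqrt_sub_sqrt_add_sub_le_relEntropy hp hq hpq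
  rw [hp1, hq1, sub_self, add_zero] at hle
  exact (tvDist_sq_le_sum_sq_sqrt_sub_sqrt hp hq hp1 hq1).trans hle

lemma relEntropy_le_log_of_le_mul {p q : α → ℝ} {C : ℝ} (hp : ∀ x, 0 ≤ p x)
    (hp1 : ∑ x, p x = 1) (hq : ∀ x, 0 ≤ q x) (hpq : ∀ x, p x ≤ C * q x) :
    relEntropy p q ≤ log C := by
  calc relEntropy p q ≤ ∑ x, p x * log C := sum_le_sum fun x _ => ?_
    _ = log C := by rw [← sum_mul, hp1, one_mul]
  rcases (hp x).eq_or_lt with h | h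
  · simp [← h]
  have hqx : 0 < q x := (hq x).lt_of_ne fun h' => by
    have hpx := hpq x
    rw [← h', mul_zero] at hpx
    linarith
  gcongr
  exact (div_le_iff₀ hqx).2 (hpq x)

end Divergences

section Marginal

variable {ι X : Type*} [Fintype ι] [DecidableEq ι] [Fintype X]

def marginal (P : (ι → X) → ℝ) (i : ι) (x : X) : ℝ := ∑ Y, if Y i = x then P Y else 0

lemma sum_marginal_mul (P : (ι → X) → ℝ) (i : ι) (h : X → ℝ) :
    ∑ x, marginal P i x * h x = ∑ Y, P Y * h (Y i) := by
  simp only [marginal, sum_mul, ite_mul, zero_mul]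
  rw [sum_comm]
  simp

lemma sum_marginal (P : (ι → X) → ℝ) (i : ι) : ∑ x, marginal P i x = ∑ Y, P Y := by
  simpa using sum_marginal_mul P i 1

lemma marginal_nonneg {P : (ι → X) → ℝ} (hP : ∀ Y, 0 ≤ P Y) (i : ι) (x : X) :
    0 ≤ marginal P i x :=
  sum_nonneg fun Y _ => ite_nonneg (hP Y) le_rfl

lemma le_marginal_apply {P : (ι → X) → ℝ} (hP : ∀ Y, 0 ≤ P Y) (Y : ι → X) (i : ι) :
    P Y ≤ marginal P i (Y i) := by
  simpa [marginal] using single_le_sum (f := fun Z => if Z i = Y i then P Z else 0)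
    (fun Z _ => ite_nonneg (hP Z) le_rfl) (mem_univ Y)

lemma exists_pos_of_marginal_pos {P : (ι → X) → ℝ} {i : ι} {x : X}
    (h : 0 < marginal P i x) : ∃ Y, Y i = x ∧ 0 < P Y := by
  by_contra! hP
  exact h.not_ge (sum_nonpos fun Y _ => by split_ifs with hY; exacts [hP Y hY, le_rfl])

lemma sum_prod_marginal (P : (ι → X) → ℝ) :
    ∑ Y : ι → X, ∏ i, marginal P i (Y i) = (∑ Y, P Y) ^ Fintype.card ι := by
  rw [← Fintype.prod_sum]
  simp [sum_marginal]

lemma tvDist_marginal_le (P G : (ι → X) → ℝ) (i : ι) :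
    tvDist (marginal P i) (marginal G i) ≤ tvDist P G := by
  unfold tvDist
  gcongr
  calc ∑ x, |marginal P i x - marginal G i x|
      = ∑ x, |∑ Y, if Y i = x then P Y - G Y else 0| := by
        simp only [marginal, ← sum_sub_distrib, ite_sub_ite, sub_zero]
    _ ≤ ∑ x, marginal (fun Y => |P Y - G Y|) i x := by
        gcongr with x
        refine (abs_sum_le_sum_abs _ _).trans_eq (sum_congr rfl fun Y _ => ?_)
        split_ifs <;> simp
    _ = ∑ Y, |P Y - G Y| := sum_marginal _ i

lemma relEntropy_pi_eq {P : (ι → X) → ℝ} {D : X → ℝ} (hP : ∀ Y, 0 ≤ P Y)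
    (hPD : ∀ Y, 0 < P Y → 0 < ∏ i, D (Y i)) :
    relEntropy P (fun Y => ∏ i, D (Y i)) =
      relEntropy P (fun Y => ∏ i, marginal P i (Y i)) + ∑ i, relEntropy (marginal P i) D := by
  have hterm : ∀ Y, P Y * log (P Y / ∏ i, D (Y i)) =
      P Y * log (P Y / ∏ i, marginal P i (Y i)) +
        ∑ i, P Y * log (marginal P i (Y i) / D (Y i)) := by
    intro Y
    rcases (hP Y).eq_or_lt with h | h
    · simp [← h]
    have hD : ∀ i ∈ univ, D (Y i) ≠ 0 := prod_ne_zero_iff.mp (hPD Y h).ne'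
    have hm : ∀ i ∈ univ, marginal P i (Y i) ≠ 0 :=
      fun i _ => (h.trans_le (le_marginal_apply hP Y i)).ne'
    rw [log_div h.ne' (prod_ne_zero_iff.mpr hD), log_div h.ne' (prod_ne_zero_iff.mpr hm),
      log_prod hD, log_prod hm, ← mul_sum]
    simp only [fun i => log_div (hm i (mem_univ i)) (hD i (mem_univ i)), sum_sub_distrib]
    ring
  simp only [relEntropy, hterm, sum_add_distrib, add_right_inj]
  rw [sum_comm]
  exact sum_congr rfl fun i _ => (sum_marginal_mul P i fun x => log (marginal P i x / D x)).symm

lemma sum_relEntropy_marginal_le {P : (ι → X) → ℝ} {D : X → ℝ} (hP : ∀ Y, 0 ≤ P Y)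
    (hP1 : ∑ Y, P Y = 1) (hPD : ∀ Y, 0 < P Y → 0 < ∏ i, D (Y i)) :
    ∑ i, relEntropy (marginal P i) D ≤ relEntropy P (fun Y => ∏ i, D (Y i)) := by
  rw [relEntropy_pi_eq hP hPD, le_add_iff_nonneg_left]
  refine relEntropy_nonneg hP (fun Y => prod_nonneg fun i _ => marginal_nonneg hP i _)
    (fun Y h => prod_pos fun i _ => h.trans_le (le_marginal_apply hP Y i)) ?_
  rw [sum_prod_marginal, hP1, one_pow]

end Marginal

section Conditional

variable {α : Type*}

def conditional (G : α → ℝ) (A : Finset α) (Y : α) : ℝ :=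
  if Y ∈ A then G Y / ∑ Z ∈ A, G Z else 0

lemma conditional_nonneg {G : α → ℝ} (hG : ∀ Y, 0 ≤ G Y) (A : Finset α) (Y : α) :
    0 ≤ conditional G A Y :=
  ite_nonneg (div_nonneg (hG Y) (sum_nonneg fun Z _ => hG Z)) le_rfl

lemma conditional_le_div_mul {G Q : α → ℝ} {A : Finset α} {c : ℝ} (hG : ∀ Y, 0 ≤ G Y)
    (hA : 0 < ∑ Z ∈ A, G Z) (hc : 0 ≤ c) (hQ : ∀ Y, 0 ≤ Q Y)
    (hdom : ∀ Y ∈ A, 0 < G Y → G Y ≤ c * Q Y) (Y : α) :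
    conditional G A Y ≤ c / (∑ Z ∈ A, G Z) * Q Y := by
  have hcQ : 0 ≤ c / (∑ Z ∈ A, G Z) * Q Y := mul_nonneg (div_nonneg hc hA.le) (hQ Y)
  unfold conditional
  split_ifs with hY
  · rcases (hG Y).eq_or_lt with h | h
    · rwa [← h, zero_div]
    · rw [div_mul_eq_mul_div, div_le_div_iff_of_pos_right hA]
      exact hdom Y hY h
  · exact hcQ

lemma sum_conditional [Fintype α] {G : α → ℝ} {A : Finset α} (hA : ∑ Z ∈ A, G Z ≠ 0) :
    ∑ Y, conditional G A Y = 1 := by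
  simp only [conditional]
  rw [sum_ite_mem, univ_inter, ← sum_div, div_self hA]

lemma tvDist_conditional [Fintype α] {G : α → ℝ} {A : Finset α} (hG : ∀ Y, 0 ≤ G Y)
    (hG1 : ∑ Y, G Y = 1) (hA : 0 < ∑ Z ∈ A, G Z) :
    tvDist (conditional G A) G = 1 - ∑ Z ∈ A, G Z := by
  have hA1 : ∑ Z ∈ A, G Z ≤ 1 :=
    hG1 ▸ sum_le_sum_of_subset_of_nonneg (subset_univ A) fun Y _ _ => hG Y
  -- `|a - b| = a + b - 2 min a b`, and `min (conditional G A) G` is `G` restricted to `A`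
  have habs : ∀ Y, |conditional G A Y - G Y| =
      conditional G A Y + G Y - 2 * (if Y ∈ A then G Y else 0) := by
    intro Y
    unfold conditional
    split_ifs
    · rw [abs_of_nonneg (sub_nonneg.2 (le_div_self (hG Y) hA hA1))]
      ring
    · simp [abs_of_nonneg (hG Y)]
  simp only [tvDist, habs, sum_sub_distrib, sum_add_distrib, ← mul_sum, sum_ite_mem, univ_inter,
    sum_conditional hA.ne', hG1]
  ring

end Conditional

section Average

variable {X : Type*} [Fintype X]

def averagedMarginal {s : ℕ} (P : (Fin s → X) → ℝ) (x : X) : ℝ :=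
  1 / (s : ℝ) * ∑ i, marginal P i x

lemma tvDist_mean_le {s : ℕ} (p q : Fin s → X → ℝ) :
    tvDist (fun x => 1 / (s : ℝ) * ∑ i, p i x) (fun x => 1 / (s : ℝ) * ∑ i, q i x) ≤
      1 / (s : ℝ) * ∑ i, tvDist (p i) (q i) := by
  have hs : (0 : ℝ) ≤ 1 / s := by positivity
  unfold tvDist
  calc 1 / 2 * ∑ x, |1 / (s : ℝ) * ∑ i, p i x - 1 / (s : ℝ) * ∑ i, q i x|
      = 1 / 2 * ∑ x, 1 / (s : ℝ) * |∑ i, (p i x - q i x)| := by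
        simp only [← mul_sub, ← sum_sub_distrib, abs_mul, abs_of_nonneg hs]
    _ ≤ 1 / 2 * ∑ x, 1 / (s : ℝ) * ∑ i, |p i x - q i x| := by
        gcongr
        exact abs_sum_le_sum_abs _ _
    _ = 1 / (s : ℝ) * ∑ i, 1 / 2 * ∑ x, |p i x - q i x| := by
        simp only [mul_sum]
        rw [sum_comm]
        ring_nf

lemma mean_le_sqrt_mean_sq {s : ℕ} (δ : Fin s → ℝ) :
    1 / (s : ℝ) * ∑ i, δ i ≤ √(1 / (s : ℝ) * ∑ i, δ i ^ 2) := by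
  refine (le_abs_self _).trans (abs_le_sqrt ?_)
  simpa [div_eq_inv_mul] using sum_div_card_sq_le_sum_sq_div_card (s := univ) (f := δ)

lemma tvDist_averagedMarginal_le {s : ℕ} (P G : (Fin s → X) → ℝ) :
    tvDist (averagedMarginal P) (averagedMarginal G) ≤ tvDist P G := by
  calc tvDist (averagedMarginal P) (averagedMarginal G)
      ≤ 1 / (s : ℝ) * ∑ i, tvDist (marginal P i) (marginal G i) := tvDist_mean_le _ _
    _ ≤ tvDist P G := by
      rw [one_div_mul_eq_div]
      refine div_le_of_le_mul₀ (Nat.cast_nonneg s) (tvDist_nonneg P G) ?_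
      simpa [mul_comm] using sum_le_sum fun i (_ : i ∈ univ) => tvDist_marginal_le P G i

lemma tvDist_averagedMarginal_le_sqrt {s : ℕ} (hs : s ≠ 0) {D : X → ℝ} (hD : ∀ x, 0 ≤ D x)
    (hD1 : ∑ x, D x = 1) {P : (Fin s → X) → ℝ} (hP : ∀ Y, 0 ≤ P Y) (hP1 : ∑ Y, P Y = 1)
    (hPD : ∀ Y, 0 < P Y → 0 < ∏ i, D (Y i)) :
    tvDist D (averagedMarginal P) ≤ √(relEntropy P (fun Y => ∏ i, D (Y i)) / s) := by
  have hmean : (fun x => 1 / (s : ℝ) * ∑ _ : Fin s, D x) = D := by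
    ext x
    simp [hs]
  have hsupp : ∀ i x, 0 < marginal P i x → 0 < D x := by
    intro i x h
    obtain ⟨Y, rfl, hY⟩ := exists_pos_of_marginal_pos h
    exact (hD _).lt_of_ne (prod_ne_zero_iff.mp (hPD Y hY).ne' i (mem_univ i)).symm
  have hpinsker : ∀ i, tvDist D (marginal P i) ^ 2 ≤ relEntropy (marginal P i) D := by
    intro i
    rw [tvDist_comm]
    exact tvDist_sq_le_relEntropy (marginal_nonneg hP i) hD (hsupp i)
      (by rw [sum_marginal, hP1]) hD1
  calc tvDist D (averagedMarginal P)
      ≤ 1 / (s : ℝ) * ∑ i, tvDist D (marginal P i) := by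
        have := tvDist_mean_le (fun _ => D) (marginal P)
        rwa [hmean] at this
    _ ≤ √(1 / (s : ℝ) * ∑ i, tvDist D (marginal P i) ^ 2) := mean_le_sqrt_mean_sq _
    _ ≤ √(relEntropy P (fun Y => ∏ i, D (Y i)) / s) := by
        rw [one_div_mul_eq_div]
        gcongr
        exact (sum_le_sum fun i _ => hpinsker i).trans (sum_relEntropy_marginal_le hP hP1 hPD)

end Average

end

lemma log_two_rpow_div_le {κ ε M : ℝ} (hκ : 0 ≤ κ) (hε0 : 0 ≤ ε) (hε1 : ε < 1)
    (hM : 1 - ε ≤ M) : log (2 ^ κ / M) ≤ 2 * (logb 2 (1 / (1 - ε)) + κ) := by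
  have h1ε : 0 < 1 - ε := by linarith
  have hlog2 : 0 < log 2 := log_pos one_lt_two
  have hlog2' : log 2 ≤ 1 := log_two_lt_d9.le.trans (by norm_num)
  have hL : 0 ≤ log (1 / (1 - ε)) := log_nonneg (by rw [le_div_iff₀ h1ε]; linarith)
  have hLM : -log M ≤ log (1 / (1 - ε)) := by
    rw [one_div, log_inv, neg_le_neg_iff]
    exact log_le_log h1ε hM
  have hlogb : log (1 / (1 - ε)) ≤ logb 2 (1 / (1 - ε)) := le_div_self hL hlog2 hlog2'
  rw [log_div (by positivity) (by linarith), log_rpow two_pos]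
  nlinarith

/-- **Adaptation of Aaronson's lemma (abstract form).**
Let `D` be a PMF on a finite type `X`, let `G` be a PMF on `X^s` (`s ≥ 1`), let
`ε ∈ [0,1)` and `κ ≥ 0`, and let `A` be a set of tuples such that `G(A) ≥ 1 - ε` and
`G Y ≤ 2^κ * ∏ i, D (Y i)` for every `Y ∈ A` with `G Y > 0`. Then the total variation
distance between `D` and the averaged marginal `(1/s) ∑ᵢ Gᵢ` of `G` is at most
`ε + sqrt (2 * (log₂ (1/(1-ε)) + κ) / s)`. -/
theorem tv_dist_averaged_marginal_le {X : Type*} [Fintype X]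
    (D : X → ℝ) (hD0 : ∀ x, 0 ≤ D x) (hD1 : ∑ x, D x = 1)
    (s : ℕ) (hs : 1 ≤ s)
    (G : (Fin s → X) → ℝ)
    (hG0 : ∀ Y, 0 ≤ G Y) (hG1 : ∑ Y : Fin s → X, G Y = 1)
    (ε κ : ℝ) (hε0 : 0 ≤ ε) (hε1 : ε < 1) (hκ : 0 ≤ κ)
    (A : Finset (Fin s → X))
    (hGA : 1 - ε ≤ ∑ Y ∈ A, G Y)
    (hdom : ∀ Y ∈ A, 0 < G Y → G Y ≤ (2 : ℝ) ^ κ * ∏ i : Fin s, D (Y i)) :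
    (1 / 2) * ∑ x : X,
        |D x - (1 / (s : ℝ)) * ∑ i : Fin s,
            (∑ Y : Fin s → X, if Y i = x then G Y else 0)|
      ≤ ε + Real.sqrt (2 * (Real.logb 2 (1 / (1 - ε)) + κ) / (s : ℝ)) := by
  set M := ∑ Y ∈ A, G Y
  have hM : 0 < M := by linarith
  set P := conditional G A
  have hPdom : ∀ Y, P Y ≤ 2 ^ κ / M * ∏ i, D (Y i) :=
    conditional_le_div_mul hG0 hM (by positivity) (fun Y => prod_nonneg fun i _ => hD0 _) hdom
  have hPD : ∀ Y, 0 < P Y → 0 < ∏ i, D (Y i) :=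
    fun Y h => pos_of_mul_pos_right (h.trans_le (hPdom Y)) (by positivity)
  have hKL : relEntropy P (fun Y => ∏ i, D (Y i)) ≤ log (2 ^ κ / M) :=
    relEntropy_le_log_of_le_mul (conditional_nonneg hG0 A) (sum_conditional hM.ne')
      (fun Y => prod_nonneg fun i _ => hD0 _) hPdom
  change tvDist D (averagedMarginal G) ≤ _
  calc tvDist D (averagedMarginal G)
      ≤ tvDist D (averagedMarginal P) + tvDist (averagedMarginal P) (averagedMarginal G) :=
        tvDist_triangle _ _ _
    _ ≤ √(relEntropy P (fun Y => ∏ i, D (Y i)) / s) + tvDist P G :=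
        add_le_add (tvDist_averagedMarginal_le_sqrt (by omega) hD0 hD1
          (conditional_nonneg hG0 A) (sum_conditional hM.ne') hPD) (tvDist_averagedMarginal_le P G)
    _ ≤ √(2 * (logb 2 (1 / (1 - ε)) + κ) / s) + ε := by
        rw [tvDist_conditional hG0 hG1 hM]
        gcongr
        · exact hKL.trans (log_two_rpow_div_le hκ hε0 hε1 hGA)
        · linarith
    _ = ε + √(2 * (logb 2 (1 / (1 - ε)) + κ) / s) := add_comm _ _
end

section
/- For each n ∈ ℕ let Q_n and R_n be probability mass functions on the set of bit strings {0,1}^{m(n)}, where m : ℕ → ℕ, and suppose the total variation distance satisfies Δ(Q_n, R_n) ≥ 1 − ν(n) for a negligible function ν (i.e., for every k ∈ ℕ, ν(n) ≤ n^{−k} for all sufficiently large n). Then for every constant c > 0 there exists a function f : ℕ → ℝ with f(n)/log₂ n → ∞ as n → ∞ such that, for all sufficiently large n, Q_n({x : R_n(x) ≤ 2^{−f(n)} · Q_n(x)}) ≥ 1 − n^{−c}. Equivalently, with probability at least 1 − n^{−c} over x ← Q_n, one has −log₂ Q_n(x) + f(n) ≤ −log₂ R_n(x). -/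
/-!
If `Δ(Q, R) ≥ 1 - ν`, the overlap `∑ₓ min (Q x) (R x) = 1 - Δ(Q, R)` is at most `ν`. On the
points where `R x > s · Q x` (with `s ≤ 1`) the overlap is at least `s · Q x`, so these points
have `Q`-mass at most `ν / s`. Take `s = 2^{-f n} = ν' n · n^c`, where `ν' ≥ ν` is a positive
negligible function: the exceptional mass is then at most `n^{-c}`, and
`f n = -log₂ ν' n - c log₂ n` outgrows every multiple of `log₂ n` because `ν'` is negligible.
-/

attribute [local instance] Classical.propDecidable

open Filter

def Negligible (ν : ℕ → ℝ) : Prop :=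
  ∀ k : ℕ, ∀ᶠ n in atTop, ν n ≤ (n : ℝ) ^ (-(k : ℝ))

namespace Negligible

variable {ν : ℕ → ℝ}

theorem rpow_neg_self : Negligible fun n => (n : ℝ) ^ (-(n : ℝ)) := by
  intro k
  filter_upwards [eventually_ge_atTop (max k 1)] with n hn
  have hn1 : (1 : ℝ) ≤ n := by exact_mod_cast le_of_max_le_right hn
  have hkn : (k : ℝ) ≤ n := by exact_mod_cast le_of_max_le_left hn
  exact Real.rpow_le_rpow_of_exponent_le hn1 (neg_le_neg hkn)

theorem max {μ : ℕ → ℝ} (hν : Negligible ν) (hμ : Negligible μ) :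
    Negligible fun n => max (ν n) (μ n) := fun k => by
  filter_upwards [hν k, hμ k] with n hνn hμn
  exact max_le hνn hμn

theorem eventually_le_rpow_neg (hν : Negligible ν) (c : ℝ) :
    ∀ᶠ n in atTop, ν n ≤ (n : ℝ) ^ (-c) := by
  filter_upwards [hν ⌈c⌉₊, eventually_ge_atTop 1] with n hνn hn
  exact hνn.trans <| Real.rpow_le_rpow_of_exponent_le (by exact_mod_cast hn)
    (neg_le_neg (Nat.le_ceil c))

theorem tendsto_neg_logb_div_logb (hν : Negligible ν) (hpos : ∀ n, 0 < ν n) :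
    Tendsto (fun n => -Real.logb 2 (ν n) / Real.logb 2 n) atTop atTop := by
  refine tendsto_atTop.2 fun b => ?_
  filter_upwards [hν ⌈b⌉₊, eventually_ge_atTop 2] with n hνn hn
  have hn0 : (0 : ℝ) < n := by positivity
  have hlog : 0 < Real.logb 2 n := Real.logb_pos one_lt_two (by exact_mod_cast hn)
  have hlogν : Real.logb 2 (ν n) ≤ -⌈b⌉₊ * Real.logb 2 n := by
    rw [← Real.logb_rpow_eq_mul_logb_of_pos hn0]
    exact Real.logb_le_logb_of_le one_lt_two (hpos n) hνn
  rw [le_div_iff₀ hlog]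
  nlinarith [Nat.le_ceil b]

theorem tendsto_logb_rpow_neg_div_div_logb (hν : Negligible ν) (hpos : ∀ n, 0 < ν n) (c : ℝ) :
    Tendsto (fun n : ℕ => Real.logb 2 ((n : ℝ) ^ (-c) / ν n) / Real.logb 2 n) atTop atTop := by
  refine (tendsto_atTop_add_const_right _ (-c) (hν.tendsto_neg_logb_div_logb hpos)).congr' ?_
  filter_upwards [eventually_ge_atTop 2] with n hn
  have hn0 : (0 : ℝ) < n := by positivity
  have hlog : Real.logb 2 n ≠ 0 := (Real.logb_pos one_lt_two (by exact_mod_cast hn)).ne'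
  rw [Real.logb_div (by positivity) (hpos n).ne', Real.logb_rpow_eq_mul_logb_of_pos hn0]
  field_simp
  ring

end Negligible

section Overlap

variable {α : Type*} [Fintype α] {Q R : α → ℝ}

theorem sum_min_eq_one_sub_half_sum_abs_sub (hQ1 : ∑ x, Q x = 1) (hR1 : ∑ x, R x = 1) :
    ∑ x, min (Q x) (R x) = 1 - (1 / 2) * ∑ x, |Q x - R x| := by
  have hmin : ∀ x, min (Q x) (R x) = (Q x + R x - |Q x - R x|) / 2 := fun x => by
    linarith [min_add_max (Q x) (R x), max_sub_min_eq_abs' (Q x) (R x)]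
  simp only [hmin, ← Finset.sum_div, Finset.sum_sub_distrib, Finset.sum_add_distrib, hQ1, hR1]
  ring

theorem mul_sum_filter_lt_le_sum_min (hQ0 : ∀ x, 0 ≤ Q x) (hR0 : ∀ x, 0 ≤ R x) {s : ℝ}
    (hs1 : s ≤ 1) :
    s * ∑ x ∈ Finset.univ.filter (fun x => ¬R x ≤ s * Q x), Q x ≤ ∑ x, min (Q x) (R x) := by
  rw [Finset.mul_sum]
  calc ∑ x ∈ Finset.univ.filter (fun x => ¬R x ≤ s * Q x), s * Q x
      ≤ ∑ x ∈ Finset.univ.filter (fun x => ¬R x ≤ s * Q x), min (Q x) (R x) := by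
        refine Finset.sum_le_sum fun x hx => le_min ?_ (not_le.1 (Finset.mem_filter.1 hx).2).le
        exact mul_le_of_le_one_left (hQ0 x) hs1
    _ ≤ ∑ x, min (Q x) (R x) :=
        Finset.sum_le_sum_of_subset_of_nonneg (Finset.filter_subset _ _)
          fun x _ _ => le_min (hQ0 x) (hR0 x)

theorem one_sub_sum_min_div_le_sum_filter (hQ0 : ∀ x, 0 ≤ Q x) (hR0 : ∀ x, 0 ≤ R x)
    (hQ1 : ∑ x, Q x = 1) {s : ℝ} (hs0 : 0 < s) (hs1 : s ≤ 1) :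
    1 - (∑ x, min (Q x) (R x)) / s ≤
      ∑ x ∈ Finset.univ.filter (fun x => R x ≤ s * Q x), Q x := by
  have hsplit := Finset.sum_filter_add_sum_filter_not Finset.univ (fun x => R x ≤ s * Q x) Q
  rw [hQ1] at hsplit
  have hbad := mul_sum_filter_lt_le_sum_min hQ0 hR0 hs1
  rw [← le_div_iff₀' hs0] at hbad
  linarith

end Overlap

/-- If `Q n` and `R n` are PMFs on `{0,1}^{m n}` with total variation distance at least
`1 - ν n` for a negligible function `ν`, then for every constant `c > 0` there is a
function `f` with `f n / log₂ n → ∞` such that, for all sufficiently large `n`,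
with probability at least `1 - n^{-c}` over `x ← Q n` we have
`R n x ≤ 2^{-f n} * Q n x` (i.e. `-log₂ (Q n x) + f n ≤ -log₂ (R n x)`). -/
theorem qas_complexity_gap (m : ℕ → ℕ)
    (Q R : (n : ℕ) → (Fin (m n) → Bool) → ℝ)
    (hQ0 : ∀ n x, 0 ≤ Q n x) (hQ1 : ∀ n, ∑ x, Q n x = 1)
    (hR0 : ∀ n x, 0 ≤ R n x) (hR1 : ∀ n, ∑ x, R n x = 1)
    (ν : ℕ → ℝ)
    (hν : ∀ k : ℕ, ∃ N : ℕ, ∀ n ≥ N, ν n ≤ (n : ℝ) ^ (-(k : ℝ)))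
    (hΔ : ∀ n, 1 - ν n ≤ (1 / 2) * ∑ x, |Q n x - R n x|) :
    ∀ c : ℝ, 0 < c → ∃ f : ℕ → ℝ,
      Tendsto (fun n => f n / Real.logb 2 (n : ℝ)) atTop atTop ∧
      ∃ N : ℕ, ∀ n ≥ N,
        1 - (n : ℝ) ^ (-c) ≤
          ∑ x ∈ Finset.univ.filter
              (fun x => R n x ≤ (2 : ℝ) ^ (-f n) * Q n x), Q n x := by
  intro c _
  set ν' : ℕ → ℝ := fun n => max (ν n) ((n : ℝ) ^ (-(n : ℝ)))
  have hν' : Negligible ν' :=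
    Negligible.max (fun k => eventually_atTop.2 (hν k)) Negligible.rpow_neg_self
  have hν'pos : ∀ n, 0 < ν' n := fun n => lt_max_of_lt_right (by
    rcases n.eq_zero_or_pos with rfl | hn
    · norm_num
    · positivity)
  refine ⟨fun n => Real.logb 2 ((n : ℝ) ^ (-c) / ν' n), ?_, ?_⟩
  · exact hν'.tendsto_logb_rpow_neg_div_div_logb hν'pos c
  obtain ⟨N, hN⟩ := eventually_atTop.1 ((hν'.eventually_le_rpow_neg c).and (eventually_gt_atTop 0))
  refine ⟨N, fun n hn => ?_⟩
  obtain ⟨hν'c, hn0⟩ := hN n hn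
  have hnc : (0 : ℝ) < (n : ℝ) ^ (-c) := by positivity
  have hs : (2 : ℝ) ^ (-Real.logb 2 ((n : ℝ) ^ (-c) / ν' n)) = ν' n / (n : ℝ) ^ (-c) := by
    rw [Real.rpow_neg zero_le_two, Real.rpow_logb two_pos (by norm_num) (div_pos hnc (hν'pos n)),
      inv_div]
  have hoverlap : ∑ x, min (Q n x) (R n x) ≤ ν' n := by
    rw [sum_min_eq_one_sub_half_sum_abs_sub (hQ1 n) (hR1 n)]
    linarith [hΔ n, le_max_left (ν n) ((n : ℝ) ^ (-(n : ℝ)))]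
  rw [hs]
  calc 1 - (n : ℝ) ^ (-c) = 1 - ν' n / (ν' n / (n : ℝ) ^ (-c)) := by
        rw [div_div_cancel₀ (hν'pos n).ne']
    _ ≤ 1 - (∑ x, min (Q n x) (R n x)) / (ν' n / (n : ℝ) ^ (-c)) := by gcongr
    _ ≤ _ := one_sub_sum_min_div_le_sum_filter (hQ0 n) (hR0 n) (hQ1 n)
        (div_pos (hν'pos n) hnc) ((div_le_one hnc).2 hν'c)
end
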